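/- arXiv:math/0602279 — 8 statements merged into one kernel-verified Lean document; each statement's English description precedes it below -/
import Mathlib

section
/- For every integer n ≥ 2, 4^{n−1} = (1/2)·C(2n, n) + ∑_{h=2}^{n} ((h−1)/h) · C(2(h−1), h−1) · C(2(n−h), n−h), as an identity of rational numbers. -/
/-!
Write `c k` for the central binomial coefficient and `C k = c k / (k + 1)` for the Catalan
number. The summand for `h` is `(c (h - 1) - C (h - 1)) * c (n - h)`, so after adding the
vanishing term `h = 1` the sum is `∑_{i+j=n-1} c i c j - ∑_{i+j=n-1} C i c j = 4^(n-1) - c n / 2`.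
Both convolution identities follow by induction from `c (k + 1) = 4 c k - 2 C k` together with
the Catalan recurrence `C (m + 1) = ∑_{i+j=m} C i C j`.
-/

open Finset Nat

namespace Nat

theorem centralBinom_succ_add_two_mul_catalan (k : ℕ) :
    centralBinom (k + 1) + 2 * catalan k = 4 * centralBinom k := by
  refine Nat.eq_of_mul_eq_mul_left k.succ_pos ?_
  calc (k + 1) * (centralBinom (k + 1) + 2 * catalan k)
      = (k + 1) * centralBinom (k + 1) + 2 * ((k + 1) * catalan k) := by ring
    _ = (k + 1) * (4 * centralBinom k) := by
      rw [succ_mul_centralBinom_succ, succ_mul_catalan_eq_centralBinom]; ring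

/-- The recurrence `centralBinom (k + 1) = 4 * centralBinom k - 2 * catalan k`, applied termwise
to a convolution with `centralBinom`. -/
theorem sum_antidiagonal_succ_mul_centralBinom (a : ℕ → ℕ) (m : ℕ) :
    ∑ p ∈ antidiagonal (m + 1), a p.1 * centralBinom p.2
        + 2 * ∑ p ∈ antidiagonal m, a p.1 * catalan p.2
      = 4 * ∑ p ∈ antidiagonal m, a p.1 * centralBinom p.2 + a (m + 1) := by
  rw [Finset.Nat.sum_antidiagonal_succ', mul_sum, mul_sum]
  dsimp only
  rw [centralBinom_zero, mul_one]
  have hterm : ∀ p ∈ antidiagonal m, a p.1 * centralBinom (p.2 + 1) + 2 * (a p.1 * catalan p.2)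
      = 4 * (a p.1 * centralBinom p.2) := fun p _ => by
    rw [mul_left_comm, ← mul_add, centralBinom_succ_add_two_mul_catalan, mul_left_comm]
  rw [← sum_congr rfl hterm, sum_add_distrib]
  ring

theorem two_mul_sum_antidiagonal_catalan_mul_centralBinom (m : ℕ) :
    2 * ∑ p ∈ antidiagonal m, catalan p.1 * centralBinom p.2 = centralBinom (m + 1) := by
  induction m with
  | zero => simp [centralBinom, choose]
  | succ m ih =>
    have hstep := sum_antidiagonal_succ_mul_centralBinom catalan m
    have hrec := centralBinom_succ_add_two_mul_catalan (m + 1)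
    rw [← catalan_succ'] at hstep
    omega

theorem sum_antidiagonal_centralBinom_mul_centralBinom (m : ℕ) :
    ∑ p ∈ antidiagonal m, centralBinom p.1 * centralBinom p.2 = 4 ^ m := by
  induction m with
  | zero => simp
  | succ m ih =>
    have hstep := sum_antidiagonal_succ_mul_centralBinom centralBinom m
    have hswap : ∑ p ∈ antidiagonal m, centralBinom p.1 * catalan p.2
        = ∑ p ∈ antidiagonal m, catalan p.1 * centralBinom p.2 := by
      rw [← Finset.Nat.sum_antidiagonal_swap]
      simp only [Prod.fst_swap, Prod.snd_swap, mul_comm]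
    have hcat := two_mul_sum_antidiagonal_catalan_mul_centralBinom m
    rw [pow_succ]
    omega

theorem sum_antidiagonal_centralBinom_sub_catalan_mul_centralBinom (m : ℕ) :
    ∑ p ∈ antidiagonal m, ((centralBinom p.1 : ℚ) - catalan p.1) * centralBinom p.2
      = 4 ^ m - centralBinom (m + 1) / 2 := by
  have hS : ∑ p ∈ antidiagonal m, (centralBinom p.1 : ℚ) * centralBinom p.2 = 4 ^ m := by
    exact_mod_cast sum_antidiagonal_centralBinom_mul_centralBinom m
  have hC : 2 * ∑ p ∈ antidiagonal m, (catalan p.1 : ℚ) * centralBinom p.2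
      = centralBinom (m + 1) := by
    exact_mod_cast two_mul_sum_antidiagonal_catalan_mul_centralBinom m
  simp only [sub_mul, sum_sub_distrib, hS]
  linarith

theorem centralBinom_sub_catalan (k : ℕ) :
    (centralBinom k : ℚ) - catalan k = k / (k + 1) * centralBinom k := by
  have h : ((k : ℚ) + 1) * catalan k = centralBinom k := by
    exact_mod_cast succ_mul_catalan_eq_centralBinom k
  field_simp
  linear_combination -h

end Nat

theorem four_pow_pred_eq_half_central_binom_add_sum (n : ℕ) (hn : 2 ≤ n) :
    (4 : ℚ) ^ (n - 1) =
      (1 / 2) * (Nat.choose (2 * n) n : ℚ) +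
        ∑ h ∈ Finset.Icc 2 n,
          (((h : ℚ) - 1) / (h : ℚ)) * (Nat.choose (2 * (h - 1)) (h - 1) : ℚ) *
            (Nat.choose (2 * (n - h)) (n - h) : ℚ) := by
  obtain ⟨m, rfl⟩ : ∃ m, n = m + 2 := ⟨n - 2, by omega⟩
  have hterm : ∀ k ∈ range (m + 1),
      (((2 + k : ℕ) : ℚ) - 1) / (2 + k : ℕ) * (choose (2 * (2 + k - 1)) (2 + k - 1) : ℚ)
          * (choose (2 * (m + 2 - (2 + k))) (m + 2 - (2 + k)) : ℚ)
        = ((centralBinom (k + 1) : ℚ) - catalan (k + 1)) * centralBinom (m - k) := by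
    intro k _
    rw [centralBinom_sub_catalan, show 2 + k - 1 = k + 1 by omega,
      show m + 2 - (2 + k) = m - k by omega, ← centralBinom_eq_two_mul_choose,
      ← centralBinom_eq_two_mul_choose]
    push_cast
    ring
  have hsum : ∑ k ∈ range (m + 1),
        ((centralBinom (k + 1) : ℚ) - catalan (k + 1)) * centralBinom (m - k)
      = ∑ p ∈ antidiagonal (m + 1), ((centralBinom p.1 : ℚ) - catalan p.1) * centralBinom p.2 := by
    rw [Finset.Nat.sum_antidiagonal_succ, Finset.Nat.sum_antidiagonal_eq_sum_range_succ
      (fun i j => ((centralBinom (i + 1) : ℚ) - catalan (i + 1)) * centralBinom j)]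
    simp
  rw [← Ico_add_one_right_eq_Icc, sum_Ico_eq_sum_range, show m + 2 + 1 - 2 = m + 1 by omega,
    sum_congr rfl hterm, hsum, sum_antidiagonal_centralBinom_sub_catalan_mul_centralBinom,
    ← centralBinom_eq_two_mul_choose, show m + 2 - 1 = m + 1 by omega]
  ring
end

section
/- For every integer n ≥ 2, 4^{n−2} = ((n−1)/n) · C(2(n−1), n−1) + ∑_{h=2}^{n−2} ((h−1)(n−h−1)/(h(n−h))) · C(2(h−1), h−1) · C(2(n−1−h), n−1−h), as an identity of rational numbers. -/
/-!
Write `B = ∑ centralBinom k Xᵏ` and `C = ∑ catalan k Xᵏ`. From `C = 1 + X C²` one gets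
`(1 - 2XC)² = 1 - 4X`, and the recurrence `centralBinom (k+1) = 4 centralBinom k - 2 catalan k`
says `B (1 - 4X) = 1 - 2XC`; cancelling the unit `1 - 2XC` gives `B (1 - 2XC) = 1`, so
`B² = 1/(1 - 4X)`. Since `(k/(k+1)) centralBinom k = centralBinom k - catalan k`, the weighted
sum of the theorem is a coefficient of `D + X D²` with `D = B - C`, and a direct computation gives
`D + X D² = X B²`.
-/

open PowerSeries Finset

theorem Nat.centralBinom_succ_add_two_mul_catalan_s2 (k : ℕ) :
    (k + 1).centralBinom + 2 * catalan k = 4 * k.centralBinom := by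
  apply Nat.eq_of_mul_eq_mul_left (Nat.add_one_pos k)
  have h₁ := Nat.succ_mul_centralBinom_succ k
  have h₂ := succ_mul_catalan_eq_centralBinom k
  rw [mul_add, h₁, mul_left_comm, h₂]
  ring

namespace PowerSeries

variable (R : Type*) [CommRing R]

noncomputable def centralBinomSeries : R⟦X⟧ := mk fun n => (n.centralBinom : R)

local notation "𝒞" => catalanSeries.map (Nat.castRingHom R)

theorem centralBinomSeries_mul_one_sub_four_mul_X :
    centralBinomSeries R * (1 - 4 * X) = 1 - 2 * X * 𝒞 := by
  ext (_ | k)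
  · simp [centralBinomSeries]
  · have := congrArg (Nat.cast : ℕ → R) (Nat.centralBinom_succ_add_two_mul_catalan_s2 k)
    push_cast at this
    have h4 : (4 : R⟦X⟧) = C 4 := (map_ofNat C 4).symm
    have h2 : (2 : R⟦X⟧) = C 2 := (map_ofNat C 2).symm
    rw [h4, h2]
    simp only [centralBinomSeries, mul_comm _ X, mul_sub, mul_one, mul_left_comm _ X, map_sub,
      coeff_mk, coeff_succ_X_mul, coeff_mul_C, mul_assoc, coeff_one, Nat.add_eq_zero_iff,
      one_ne_zero, and_false, ↓reduceIte, coeff_C_mul, coeff_map, catalanSeries_coeff, eq_natCast,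
      zero_sub]
    linear_combination this

theorem one_sub_two_mul_X_mul_catalanSeries_sq : (1 - 2 * X * 𝒞) ^ 2 = (1 - 4 * X : R⟦X⟧) := by
  have h := congrArg (map (Nat.castRingHom R)) catalanSeries_sq_mul_X_add_one
  simp only [map_add, map_mul, map_pow, map_X, map_one] at h
  linear_combination (4 * X) * h

theorem centralBinomSeries_mul_one_sub_two_mul_X_mul_catalanSeries :
    centralBinomSeries R * (1 - 2 * X * 𝒞) = 1 := by
  have hu : IsUnit (1 - 2 * X * 𝒞) := by
    rw [isUnit_iff_constantCoeff]
    simp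
  apply hu.mul_left_cancel
  linear_combination centralBinomSeries_mul_one_sub_four_mul_X R +
    centralBinomSeries R * one_sub_two_mul_X_mul_catalanSeries_sq R

theorem centralBinomSeries_sq : centralBinomSeries R ^ 2 = mk fun n => (4 : R) ^ n := by
  have hgeom : (mk fun n => (4 : R) ^ n) * (1 - 4 * X) = 1 := by
    simpa [rescale_X, rescale_mk, ← map_ofNat C] using
      congrArg (rescale (4 : R)) (mk_one_mul_one_sub_eq_one (S := R))
  have hsq : centralBinomSeries R ^ 2 * (1 - 4 * X) = 1 := by
    linear_combination
      (centralBinomSeries R * (1 - 2 * X * 𝒞) + 1) *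
          centralBinomSeries_mul_one_sub_two_mul_X_mul_catalanSeries R -
        centralBinomSeries R ^ 2 * one_sub_two_mul_X_mul_catalanSeries_sq R
  linear_combination (mk fun n => (4 : R) ^ n) * hsq - centralBinomSeries R ^ 2 * hgeom

theorem centralBinomSeries_sub_catalanSeries_add_X_mul_sq :
    (centralBinomSeries R - 𝒞) + X * (centralBinomSeries R - 𝒞) ^ 2 =
      X * centralBinomSeries R ^ 2 := by
  have hC := congrArg (map (Nat.castRingHom R)) catalanSeries_sq_mul_X_add_one
  simp only [map_add, map_mul, map_pow, map_X, map_one] at hC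
  linear_combination centralBinomSeries_mul_one_sub_two_mul_X_mul_catalanSeries R + hC

end PowerSeries

open PowerSeries in
theorem centralBinom_sub_catalan_add_sum_antidiagonal {R : Type*} [CommRing R] (m : ℕ) :
    ((m + 1).centralBinom - catalan (m + 1) : R) +
      ∑ p ∈ antidiagonal m,
        ((p.1.centralBinom : R) - catalan p.1) * ((p.2.centralBinom : R) - catalan p.2) =
      4 ^ m := by
  have h := congrArg (coeff (m + 1)) (centralBinomSeries_sub_catalanSeries_add_X_mul_sq R)
  rw [map_add, coeff_succ_X_mul, coeff_succ_X_mul, centralBinomSeries_sq, sq, coeff_mul] at h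
  simpa [centralBinomSeries] using h

theorem sub_one_div_mul_choose_eq_centralBinom_sub_catalan {K : Type*} [Field K] [CharZero K]
    {n : ℕ} (hn : 1 ≤ n) :
    ((n : K) - 1) / n * (Nat.choose (2 * (n - 1)) (n - 1) : K) =
      (n - 1).centralBinom - catalan (n - 1) := by
  obtain ⟨k, rfl⟩ := Nat.exists_eq_add_of_le' hn
  have h := congrArg (Nat.cast : ℕ → K) (succ_mul_catalan_eq_centralBinom k)
  push_cast at h
  rw [Nat.add_sub_cancel, ← Nat.centralBinom_eq_two_mul_choose]
  push_cast
  field_simp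
  linear_combination h

theorem sum_Icc_two_eq_sum_antidiagonal {M : Type*} [AddCommMonoid M] (f : ℕ → ℕ → M)
    (hf₀ : ∀ j, f 0 j = 0) (hf₀' : ∀ i, f i 0 = 0) (m : ℕ) :
    ∑ h ∈ Icc 2 m, f (h - 1) (m + 1 - h) = ∑ p ∈ antidiagonal m, f p.1 p.2 := by
  rw [Nat.sum_antidiagonal_eq_sum_range_succ_mk]
  calc ∑ h ∈ Icc 2 m, f (h - 1) (m + 1 - h)
      = ∑ h ∈ range (m + 2), f (h - 1) (m + 1 - h) := by
        refine sum_subset (fun h hh => ?_) (fun h hh hh' => ?_)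
        · simp only [mem_Icc, mem_range] at hh ⊢; omega
        · simp only [mem_Icc, mem_range] at hh hh'
          obtain h | h : h - 1 = 0 ∨ m + 1 - h = 0 := by omega
          · rw [h, hf₀]
          · rw [h, hf₀']
    _ = ∑ i ∈ range (m + 1), f i (m - i) := by
        rw [sum_range_succ', Nat.zero_sub, hf₀, add_zero]
        simp only [Nat.add_sub_cancel, Nat.add_sub_add_right]

theorem four_pow_sub_two_eq_sum (n : ℕ) (hn : 2 ≤ n) :
    (4 : ℚ) ^ (n - 2) =
      (((n : ℚ) - 1) / (n : ℚ)) * (Nat.choose (2 * (n - 1)) (n - 1) : ℚ) +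
        ∑ h ∈ Finset.Icc 2 (n - 2),
          ((((h : ℚ) - 1) * ((n : ℚ) - (h : ℚ) - 1)) / ((h : ℚ) * ((n : ℚ) - (h : ℚ)))) *
            (Nat.choose (2 * (h - 1)) (h - 1) : ℚ) *
            (Nat.choose (2 * (n - 1 - h)) (n - 1 - h) : ℚ) := by
  obtain ⟨m, rfl⟩ := Nat.exists_eq_add_of_le' hn
  rw [sub_one_div_mul_choose_eq_centralBinom_sub_catalan (by omega), Nat.add_sub_cancel,
    show m + 2 - 1 = m + 1 by omega, ← centralBinom_sub_catalan_add_sum_antidiagonal m,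
    ← sum_Icc_two_eq_sum_antidiagonal
      (fun i j => ((i.centralBinom : ℚ) - catalan i) * ((j.centralBinom : ℚ) - catalan j))
      (by simp) (by simp)]
  congr 1
  refine sum_congr rfl fun h hh => ?_
  rw [mem_Icc] at hh
  rw [show m + 1 - h = m + 2 - h - 1 by omega,
    ← sub_one_div_mul_choose_eq_centralBinom_sub_catalan (show 1 ≤ h by omega),
    ← sub_one_div_mul_choose_eq_centralBinom_sub_catalan (show 1 ≤ m + 2 - h by omega),
    Nat.cast_sub (show h ≤ m + 2 by omega), mul_div_mul_comm]
  ring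
end

section
/- Let E be a real vector space of dimension ℓ, let α_1, …, α_ℓ be a basis of E, and let α_0 = ∑_{j=1}^{ℓ} n_j α_j where every coefficient n_j is a negative real number. For each i = 0, 1, …, ℓ, let C^{(i)} denote the set of all linear combinations with nonnegative coefficients of the ℓ vectors {α_0, …, α_ℓ} \ {α_i}. Then E = ⋃_{i=0}^{ℓ} C^{(i)}, i.e., every vector u ∈ E lies in at least one of the cones C^{(i)}. -/
/-!
Write `u = ∑ dⱼ αⱼ` over `j ≥ 1`. If all `dⱼ ≥ 0` we are in `C⁽⁰⁾`. Otherwise bring in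
`α₀ = ∑ nⱼ αⱼ`: `u = t α₀ + ∑ (dⱼ - t nⱼ) αⱼ` for every `t`, and since all `nⱼ < 0`,
taking `t = maxⱼ dⱼ / nⱼ > 0` makes every new coefficient nonnegative and one of them zero.
-/

theorem exists_nonneg_forall_sub_mul_nonneg {ι 𝕜 : Type*} [Finite ι] [Field 𝕜] [LinearOrder 𝕜]
    [IsStrictOrderedRing 𝕜] {d n : ι → 𝕜} (hn : ∀ j, n j < 0) (hd : ∃ j, d j < 0) :
    ∃ t, 0 ≤ t ∧ (∀ j, 0 ≤ d j - t * n j) ∧ ∃ j₀, d j₀ - t * n j₀ = 0 := by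
  obtain ⟨j₁, hj₁⟩ := hd
  have : Nonempty ι := ⟨j₁⟩
  obtain ⟨j₀, hmax⟩ := Finite.exists_max fun j => d j / n j
  refine ⟨d j₀ / n j₀, (div_pos_of_neg_of_neg hj₁ (hn j₁)).le.trans (hmax j₁), fun j => ?_, j₀, ?_⟩
  · have := (div_le_iff_of_neg (hn j)).mp (hmax j)
    linarith
  · rw [div_mul_cancel₀ _ (hn j₀).ne, sub_self]

theorem sum_cons_sub_mul_smul {R M : Type*} [CommRing R] [AddCommGroup M] [Module R M] {ℓ : ℕ}
    (α : Fin (ℓ + 1) → M) (n d : Fin ℓ → R) (t : R) (h0 : α 0 = ∑ j, n j • α j.succ) :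
    ∑ k, (Fin.cons t fun j => d j - t * n j : Fin (ℓ + 1) → R) k • α k =
      ∑ j, d j • α j.succ := by
  simp only [Fin.sum_univ_succ, Fin.cons_zero, Fin.cons_succ, h0, Finset.smul_sum, smul_smul,
    ← Finset.sum_add_distrib, ← add_smul, mul_comm t, add_sub_cancel]

theorem mem_union_of_cones_general {ℓ : ℕ} {E : Type*} [AddCommGroup E] [Module ℝ E]
    (α : Fin (ℓ + 1) → E)
    (hspan : Submodule.span ℝ (Set.range fun j : Fin ℓ => α j.succ) = ⊤)
    (n : Fin ℓ → ℝ) (hn : ∀ j, n j < 0)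
    (h0 : α 0 = ∑ j : Fin ℓ, n j • α j.succ) :
    ∀ u : E, ∃ i : Fin (ℓ + 1), ∃ c : Fin (ℓ + 1) → ℝ,
      (∀ k, 0 ≤ c k) ∧ c i = 0 ∧ u = ∑ k : Fin (ℓ + 1), c k • α k := by
  intro u
  obtain ⟨d, hd⟩ := Submodule.mem_span_range_iff_exists_fun ℝ |>.mp (hspan ▸ Submodule.mem_top)
  obtain ⟨t, ht, hc, i, hi⟩ : ∃ t : ℝ, 0 ≤ t ∧ (∀ j, 0 ≤ d j - t * n j) ∧
      ∃ i, (Fin.cons t fun j => d j - t * n j : Fin (ℓ + 1) → ℝ) i = 0 := by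
    by_cases hneg : ∃ j, d j < 0
    · obtain ⟨t, ht, hc, j₀, hj₀⟩ := exists_nonneg_forall_sub_mul_nonneg hn hneg
      exact ⟨t, ht, hc, j₀.succ, hj₀⟩
    · simp only [not_exists, not_lt] at hneg
      exact ⟨0, le_rfl, by simpa using hneg, 0, rfl⟩
  exact ⟨i, _, Fin.cases ht hc, hi, (sum_cons_sub_mul_smul α n d t h0).trans hd |>.symm⟩

/-- If `α 1, …, α ℓ` is a basis of `E` and `α 0 = ∑ j n j • α j.succ` with all `n j < 0`,
then every vector of `E` is a nonnegative linear combination of one of the `ℓ`-element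
subsets `{α 0, …, α ℓ} \ {α i}`. -/
theorem mem_union_of_cones {ℓ : ℕ} {E : Type*} [AddCommGroup E] [Module ℝ E]
    (α : Fin (ℓ + 1) → E)
    (hli : LinearIndependent ℝ (fun j : Fin ℓ => α j.succ))
    (hspan : Submodule.span ℝ (Set.range fun j : Fin ℓ => α j.succ) = ⊤)
    (n : Fin ℓ → ℝ) (hn : ∀ j, n j < 0)
    (h0 : α 0 = ∑ j : Fin ℓ, n j • α j.succ) :
    ∀ u : E, ∃ i : Fin (ℓ + 1), ∃ c : Fin (ℓ + 1) → ℝ,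
      (∀ k, 0 ≤ c k) ∧ c i = 0 ∧ u = ∑ k : Fin (ℓ + 1), c k • α k :=
  mem_union_of_cones_general α hspan n hn h0
end

section
/- Let E be a real vector space of dimension ℓ, let α_1, …, α_ℓ be a basis of E, and let α_0 = ∑_{j=1}^{ℓ} n_j α_j where every coefficient n_j is a negative real number. For each i = 0, 1, …, ℓ, let C°^{(i)} denote the set of all linear combinations with strictly positive coefficients of the ℓ vectors {α_0, …, α_ℓ} \ {α_i}. Then for all i ≠ j, the sets C°^{(i)} and C°^{(j)} are disjoint. -/
/-!
The only linear relations among `α 0, …, α ℓ` are the multiples of `α 0 - ∑ j, n j • α j.succ`,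
whose coefficient vector `(1, -n 1, …, -n ℓ)` is strictly positive. So if two positive
combinations, one omitting `α i` and one omitting `α j`, had the same value, their difference
`c - d` would be `t • (1, -n)` for some real `t`; the `i`-th coordinate `-d i < 0` forces `t < 0`,
while the `j`-th coordinate `c j > 0` forces `t > 0`.
-/

theorem eq_smul_cons_of_sum_smul_eq_zero {R E : Type*} [CommRing R] [AddCommGroup E] [Module R E]
    {ℓ : ℕ} {α : Fin (ℓ + 1) → E} (hli : LinearIndependent R (fun j : Fin ℓ => α j.succ))
    {n : Fin ℓ → R} (h0 : α 0 = ∑ j : Fin ℓ, n j • α j.succ)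
    {e : Fin (ℓ + 1) → R} (he : ∑ k, e k • α k = 0) :
    e = e 0 • Fin.cons 1 (-n) := by
  have hrel : ∑ k : Fin ℓ, (e 0 * n k + e k.succ) • α k.succ = 0 := by
    rw [← he, Fin.sum_univ_succ, h0, Finset.smul_sum, ← Finset.sum_add_distrib]
    exact Finset.sum_congr rfl fun k _ => by rw [add_smul, smul_smul]
  have hcoeff := Fintype.linearIndependent_iff.mp hli _ hrel
  funext k
  cases k using Fin.cases with
  | zero => simp
  | succ k => simpa [eq_neg_iff_add_eq_zero, add_comm] using hcoeff k

theorem cons_one_neg_pos {ℓ : ℕ} {n : Fin ℓ → ℝ} (hn : ∀ j, n j < 0) :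
    ∀ k, 0 < (Fin.cons 1 (-n) : Fin (ℓ + 1) → ℝ) k :=
  Fin.cases one_pos fun k => by simpa using hn k

theorem open_cones_disjoint_general {ℓ : ℕ} {E : Type*} [AddCommGroup E] [Module ℝ E]
    (α : Fin (ℓ + 1) → E)
    (hli : LinearIndependent ℝ (fun j : Fin ℓ => α j.succ))
    (n : Fin ℓ → ℝ) (hn : ∀ j, n j < 0)
    (h0 : α 0 = ∑ j : Fin ℓ, n j • α j.succ) :
    ∀ i j : Fin (ℓ + 1), i ≠ j →
      Disjoint
        {u : E | ∃ c : Fin (ℓ + 1) → ℝ, (∀ k, k ≠ i → 0 < c k) ∧ c i = 0 ∧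
          u = ∑ k : Fin (ℓ + 1), c k • α k}
        {u : E | ∃ c : Fin (ℓ + 1) → ℝ, (∀ k, k ≠ j → 0 < c k) ∧ c j = 0 ∧
          u = ∑ k : Fin (ℓ + 1), c k • α k} := by
  intro i j hij
  rw [Set.disjoint_left]
  rintro u ⟨c, hc, hci, rfl⟩ ⟨d, hd, hdj, hu⟩
  have hdiff : ∑ k, (c - d) k • α k = 0 := by
    simp only [Pi.sub_apply, sub_smul, Finset.sum_sub_distrib, hu, sub_self]
  have hker := eq_smul_cons_of_sum_smul_eq_zero hli h0 hdiff
  have hw := cons_one_neg_pos hn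
  have hi := congr_fun hker i
  have hj := congr_fun hker j
  simp only [Pi.sub_apply, Pi.smul_apply, smul_eq_mul] at hi hj
  have hdi := hd i hij
  have hcj := hc j hij.symm
  nlinarith [hw i, hw j]

/-- If `α 1, …, α ℓ` is a basis of `E` and `α 0 = ∑ j n j • α j.succ` with all `n j < 0`,
then the open cones of strictly positive combinations of the `ℓ`-element subsets
`{α 0, …, α ℓ} \ {α i}` are pairwise disjoint. -/
theorem open_cones_disjoint {ℓ : ℕ} {E : Type*} [AddCommGroup E] [Module ℝ E]
    (α : Fin (ℓ + 1) → E)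
    (hli : LinearIndependent ℝ (fun j : Fin ℓ => α j.succ))
    (hspan : Submodule.span ℝ (Set.range fun j : Fin ℓ => α j.succ) = ⊤)
    (n : Fin ℓ → ℝ) (hn : ∀ j, n j < 0)
    (h0 : α 0 = ∑ j : Fin ℓ, n j • α j.succ) :
    ∀ i j : Fin (ℓ + 1), i ≠ j →
      Disjoint
        {u : E | ∃ c : Fin (ℓ + 1) → ℝ, (∀ k, k ≠ i → 0 < c k) ∧ c i = 0 ∧
          u = ∑ k : Fin (ℓ + 1), c k • α k}
        {u : E | ∃ c : Fin (ℓ + 1) → ℝ, (∀ k, k ≠ j → 0 < c k) ∧ c j = 0 ∧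
          u = ∑ k : Fin (ℓ + 1), c k • α k} :=
  open_cones_disjoint_general α hli n hn h0
end

section
/- Let α_1, …, α_ℓ be a basis of ℝ^ℓ and let α_0 = ∑_{j=1}^{ℓ} n_j α_j where every coefficient n_j is a negative real number. For each i = 0, 1, …, ℓ, let C^{(i)} denote the cone of nonnegative linear combinations of the ℓ vectors {α_0, …, α_ℓ} \ {α_i}, let B be the closed unit ball of ℝ^ℓ, and let λ denote Lebesgue measure. Then ∑_{i=0}^{ℓ} λ(C^{(i)} ∩ B) / λ(B) = 1. -/
/-!
The vectors satisfy the positive relation `α 0 - ∑ j, n j • α j.succ = 0`, and since the `α j.succ`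
form a basis it is their only linear relation up to scaling. Subtracting the largest admissible
multiple of it from an arbitrary representation `u = ∑ k, d k • α k` leaves nonnegative
coefficients, one of which vanishes, so the cones `C⁽ⁱ⁾` cover the space. If `u` lies in `C⁽ⁱ⁾`
and in `C⁽ʲ⁾`, its two representations differ by a multiple of the relation whose sign is forced
to be both `≤ 0` (at `i`) and `≥ 0` (at `j`); hence they agree, and `u` lies in the span of the
`ℓ - 1` vectors other than `α i`, `α j`, which is Lebesgue-null. So the cones cut the ball into
pieces that overlap only in null sets.
-/

open MeasureTheory

variable {ι V : Type*} [Fintype ι]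

def coneOmitting [AddCommMonoid V] [Module ℝ V] (v : ι → V) (i : ι) : Set V :=
  {u | ∃ c : ι → ℝ, (∀ k, 0 ≤ c k) ∧ c i = 0 ∧ u = ∑ k, c k • v k}

section Module

variable [AddCommGroup V] [Module ℝ V] {v : ι → V} {c : ι → ℝ}

theorem exists_mem_coneOmitting [Nonempty ι] (hspan : Submodule.span ℝ (Set.range v) = ⊤)
    (hc : ∀ k, 0 < c k) (hrel : ∑ k, c k • v k = 0) (u : V) :
    ∃ i, u ∈ coneOmitting v i := by
  obtain ⟨d, rfl⟩ :=
    (Submodule.mem_span_range_iff_exists_fun ℝ).1 (hspan ▸ Submodule.mem_top (x := u))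
  obtain ⟨i, -, hi⟩ := Finset.univ.exists_min_image (fun k => d k / c k) Finset.univ_nonempty
  refine ⟨i, fun k => d k - d i / c i * c k, fun k => ?_, ?_, ?_⟩
  · simpa [← le_div_iff₀ (hc k)] using hi k (Finset.mem_univ k)
  · simp [(hc i).ne']
  · simp only [sub_smul, Finset.sum_sub_distrib, mul_smul, ← Finset.smul_sum, hrel, smul_zero,
      sub_zero]

theorem coneOmitting_inter_subset_span [DecidableEq ι] (hc : ∀ k, 0 < c k)
    (hker : ∀ e : ι → ℝ, ∑ k, e k • v k = 0 → ∃ t : ℝ, e = t • c) {i j : ι} :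
    coneOmitting v i ∩ coneOmitting v j ⊆
      Submodule.span ℝ (Set.range fun k : ({i, j}ᶜ : Finset ι) => v k) := by
  rintro u ⟨⟨a, ha, hai, rfl⟩, ⟨b, hb, hbj, hab⟩⟩
  obtain ⟨t, ht⟩ := hker (a - b) (by simp [sub_smul, Finset.sum_sub_distrib, hab])
  have hti := congrFun ht i
  have htj := congrFun ht j
  simp only [Pi.sub_apply, Pi.smul_apply, smul_eq_mul, hai] at hti htj
  have ht0 : t = 0 := le_antisymm (nonpos_of_mul_nonpos_left (by linarith [hb i]) (hc i))
    (nonneg_of_mul_nonneg_left (by linarith [ha j, hb j]) (hc j))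
  have haj : a j = 0 := by simpa [ht0, hbj] using htj
  refine Submodule.sum_mem _ fun k _ => ?_
  by_cases hk : k ∈ ({i, j}ᶜ : Finset ι)
  · exact Submodule.smul_mem _ _ (Submodule.subset_span ⟨⟨k, hk⟩, rfl⟩)
  · obtain rfl | rfl : k = i ∨ k = j := by simp at hk; tauto
    all_goals simp [hai, haj]

theorem exists_eq_smul_of_sum_smul_eq_zero {m : ℕ} {v : Fin (m + 1) → V} {c : Fin (m + 1) → ℝ}
    (hli : LinearIndependent ℝ fun j : Fin m => v j.succ) (hc0 : c 0 = 1)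
    (hrel : ∑ k, c k • v k = 0) (e : Fin (m + 1) → ℝ) (he : ∑ k, e k • v k = 0) :
    ∃ t : ℝ, e = t • c := by
  have hsucc : ∑ j : Fin m, (e j.succ - e 0 * c j.succ) • v j.succ = 0 := by
    have : ∑ k, (e k - e 0 * c k) • v k = 0 := by
      simp only [sub_smul, Finset.sum_sub_distrib, mul_smul, ← Finset.smul_sum, he, hrel,
        smul_zero, sub_zero]
    simpa [Fin.sum_univ_succ, hc0] using this
  refine ⟨e 0, funext fun k => Fin.cases (by simp [hc0]) (fun j => ?_) k⟩
  simpa [sub_eq_zero] using Fintype.linearIndependent_iff.1 hli _ hsucc j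

end Module

section Measure

variable [NormedAddCommGroup V] [NormedSpace ℝ V] [MeasurableSpace V] [BorelSpace V]

theorem measurableSet_coneOmitting (v : ι → V) (i : ι) : MeasurableSet (coneOmitting v i) := by
  set face : Set (ι → ℝ) := {c | (∀ k, 0 ≤ c k) ∧ c i = 0}
  have hface : IsClosed face := by
    simp only [face, Set.ofPred_and, Set.ofPred_forall]
    exact (isClosed_iInter fun k => isClosed_le continuous_const (continuous_apply k)).inter
      (isClosed_eq (continuous_apply i) continuous_const)
  have himage : coneOmitting v i = (fun c : ι → ℝ => ∑ k, c k • v k) '' face := by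
    ext u; simp [face, coneOmitting, eq_comm, and_assoc]
  -- a continuous image of a closed subset of `ι → ℝ` is σ-compact, hence Borel
  obtain ⟨K, hK, hKu⟩ := (isSigmaCompact_univ.of_isClosed_subset hface (Set.subset_univ _)).image
    (by fun_prop : Continuous fun c : ι → ℝ => ∑ k, c k • v k)
  rw [himage, ← hKu]
  exact MeasurableSet.iUnion fun n => (hK n).measurableSet

theorem measure_coneOmitting_inter_eq_zero [FiniteDimensional ℝ V] (μ : Measure V)
    [μ.IsAddHaarMeasure] {v : ι → V} {c : ι → ℝ}
    (hcard : Fintype.card ι ≤ Module.finrank ℝ V + 1) (hc : ∀ k, 0 < c k)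
    (hker : ∀ e : ι → ℝ, ∑ k, e k • v k = 0 → ∃ t : ℝ, e = t • c) {i j : ι} (hij : i ≠ j) :
    μ (coneOmitting v i ∩ coneOmitting v j) = 0 := by
  classical
  refine measure_mono_null (coneOmitting_inter_subset_span hc hker)
    (Measure.addHaar_submodule μ _ fun htop => ?_)
  have hrank := finrank_range_le_card (R := ℝ) fun k : ({i, j}ᶜ : Finset ι) => v k
  rw [Set.finrank, htop, finrank_top, Fintype.card_coe, Finset.card_compl,
    Finset.card_pair hij] at hrank
  have := Fintype.one_lt_card_iff_nontrivial.2 ⟨i, j, hij⟩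
  omega

end Measure

theorem sum_measure_inter_div_eq_one {Ω : Type*} [MeasurableSpace Ω] (μ : Measure Ω)
    {A : ι → Set Ω} (hcov : ∀ x, ∃ i, x ∈ A i)
    (hdisj : Pairwise fun i j => AEDisjoint μ (A i) (A j)) (hA : ∀ i, NullMeasurableSet (A i) μ)
    {B : Set Ω} (hBm : NullMeasurableSet B μ) (hB0 : μ B ≠ 0) (hB : μ B ≠ ⊤) :
    ∑ i, μ (A i ∩ B) / μ B = 1 := by
  have hU : ⋃ i, A i ∩ B = B := by
    rw [← Set.iUnion_inter, Set.iUnion_eq_univ_iff.2 hcov, Set.univ_inter]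
  have hsum : ∑ i, μ (A i ∩ B) = μ B := by
    rw [← tsum_fintype (L := .unconditional _), ← measure_iUnion₀, hU]
    exacts [fun i j hij => (hdisj hij).mono Set.inter_subset_left Set.inter_subset_left,
      fun i => (hA i).inter hBm]
  simp only [div_eq_mul_inv, ← Finset.sum_mul, hsum, ENNReal.mul_inv_cancel hB0 hB]

/-- If `α 1, …, α ℓ` is a basis of `ℝ^ℓ` and `α 0 = ∑ j n j • α j.succ` with all `n j < 0`,
then the normalized solid angles of the cones generated by the `ℓ`-element subsets
`{α 0, …, α ℓ} \ {α i}` sum to `1`. -/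
theorem sum_solid_angles_eq_one {ℓ : ℕ}
    (α : Fin (ℓ + 1) → EuclideanSpace ℝ (Fin ℓ))
    (hli : LinearIndependent ℝ (fun j : Fin ℓ => α j.succ))
    (hspan : Submodule.span ℝ (Set.range fun j : Fin ℓ => α j.succ) = ⊤)
    (n : Fin ℓ → ℝ) (hn : ∀ j, n j < 0)
    (h0 : α 0 = ∑ j : Fin ℓ, n j • α j.succ) :
    ∑ i : Fin (ℓ + 1),
        volume ({u : EuclideanSpace ℝ (Fin ℓ) |
              ∃ c : Fin (ℓ + 1) → ℝ, (∀ k, 0 ≤ c k) ∧ c i = 0 ∧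
                u = ∑ k : Fin (ℓ + 1), c k • α k} ∩
            Metric.closedBall 0 1) /
          volume (Metric.closedBall (0 : EuclideanSpace ℝ (Fin ℓ)) 1) = 1 := by
  set c : Fin (ℓ + 1) → ℝ := Fin.cons 1 fun j => -n j
  have hc : ∀ k, 0 < c k := Fin.cases (by simp [c]) fun j => by simp [c, hn j]
  have hrel : ∑ k, c k • α k = 0 := by simp [c, Fin.sum_univ_succ, h0]
  have hspan' : Submodule.span ℝ (Set.range α) = ⊤ :=
    eq_top_iff.2 (hspan ▸ Submodule.span_mono (Set.range_comp_subset_range Fin.succ α))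
  exact sum_measure_inter_div_eq_one volume (A := coneOmitting α)
    (exists_mem_coneOmitting hspan' hc hrel)
    (fun i j hij => measure_coneOmitting_inter_eq_zero volume (by simp) hc
      (exists_eq_smul_of_sum_smul_eq_zero hli rfl hrel) hij)
    (fun i => (measurableSet_coneOmitting α i).nullMeasurableSet)
    measurableSet_closedBall.nullMeasurableSet
    (Metric.measure_closedBall_pos volume 0 one_pos).ne' measure_closedBall_lt_top.ne
end

section
/- Let E_1 and E_2 be finite-dimensional real inner product spaces, let E = E_1 × E_2 with the product inner product, and let C_1 ⊆ E_1 and C_2 ⊆ E_2 be measurable convex cones. Let B, B_1, B_2 denote the closed unit balls of E, E_1, E_2 respectively and λ the corresponding Lebesgue (Haar) measures. Then λ((C_1 × C_2) ∩ B)/λ(B) = (λ_1(C_1 ∩ B_1)/λ_1(B_1)) · (λ_2(C_2 ∩ B_2)/λ_2(B_2)), i.e., the normalized solid angle of the product cone is the product of the normalized solid angles. -/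
/-!
For a set `C` stable under positive dilations, the layer-cake formula writes the Gaussian mass
`∫_C e^{-‖x‖²} dλ` as an integral of `λ(C ∩ B(0, √(-log t)))`, and homogeneity of Haar measure
turns this into `c_n · λ(C ∩ B)` with a constant `c_n ∈ (0, ∞)` depending only on the dimension.
So the normalized solid angle of `C` is its Gaussian mass divided by the total Gaussian mass. On
`E₁ ×₂ E₂` the Gaussian is the product of the Gaussians of the factors, so by Fubini both masses
are multiplicative.
-/

open MeasureTheory Set Metric Pointwise
open scoped ENNReal

noncomputable def gaussianWeight {F : Type*} [Norm F] (x : F) : ℝ≥0∞ :=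
  ENNReal.ofReal (Real.exp (-‖x‖ ^ 2))

noncomputable def gaussianConeConstant (n : ℕ) : ℝ≥0∞ :=
  ∫⁻ t in Ioo (0 : ℝ) 1, ENNReal.ofReal (√(-Real.log t) ^ n)

lemma gaussianConeConstant_ne_zero (n : ℕ) : gaussianConeConstant n ≠ 0 := by
  refine ((setLIntegral_pos_iff (by fun_prop)).2 ?_).ne'
  have hsupp :
      Ioo (0 : ℝ) 1 ⊆ Function.support fun t : ℝ ↦ ENNReal.ofReal (√(-Real.log t) ^ n) :=
    fun t ht ↦ by
      have : 0 < -Real.log t := neg_pos.2 (Real.log_neg ht.1 ht.2)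
      simp only [Function.mem_support, ne_eq, ENNReal.ofReal_eq_zero, not_le]
      positivity
  rw [inter_eq_right.2 hsupp]
  simp

lemma setOf_le_exp_neg_norm_sq {F : Type*} [SeminormedAddCommGroup F] {t : ℝ} (ht₀ : 0 < t)
    (ht₁ : t ≤ 1) :
    {x : F | t ≤ Real.exp (-‖x‖ ^ 2)} = closedBall 0 √(-Real.log t) := by
  ext x
  rw [mem_ofPred_eq, mem_closedBall_zero_iff, Real.le_sqrt (norm_nonneg x)
    (neg_nonneg.2 (Real.log_nonpos ht₀.le ht₁)), ← Real.log_le_iff_le_exp ht₀]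
  constructor <;> intro h <;> linarith

lemma setOf_le_exp_neg_norm_sq_of_one_lt {F : Type*} [SeminormedAddCommGroup F] {t : ℝ}
    (ht : 1 < t) : {x : F | t ≤ Real.exp (-‖x‖ ^ 2)} = ∅ :=
  eq_empty_of_forall_notMem fun x hx ↦
    (hx.trans (Real.exp_le_one_iff.2 (neg_nonpos.2 (sq_nonneg ‖x‖)))).not_gt ht

lemma smul_set_eq_of_pos_smul_mem {F : Type*} [AddCommGroup F] [Module ℝ F] {C : Set F}
    (hC : ∀ c : ℝ, 0 < c → ∀ x ∈ C, c • x ∈ C) {r : ℝ} (hr : 0 < r) : r • C = C := by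
  refine (smul_set_subset_iff.2 fun x hx ↦ hC r hr x hx).antisymm fun x hx ↦ ?_
  exact ⟨r⁻¹ • x, hC _ (inv_pos.2 hr) x hx, smul_inv_smul₀ hr.ne' x⟩

section HaarMeasure

variable {F : Type*} [NormedAddCommGroup F] [NormedSpace ℝ F] [FiniteDimensional ℝ F]
  [MeasurableSpace F] [BorelSpace F] (μ : Measure F) [μ.IsAddHaarMeasure]

lemma measure_inter_closedBall_of_pos_smul_mem {C : Set F}
    (hC : ∀ c : ℝ, 0 < c → ∀ x ∈ C, c • x ∈ C) {r : ℝ} (hr : 0 < r) :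
    μ (C ∩ closedBall 0 r) = ENNReal.ofReal (r ^ Module.finrank ℝ F) * μ (C ∩ closedBall 0 1) := by
  have : C ∩ closedBall 0 r = r • (C ∩ closedBall 0 1) := by
    rw [smul_set_inter₀ hr.ne', smul_set_eq_of_pos_smul_mem hC hr,
      _root_.smul_closedBall _ _ zero_le_one, smul_zero, Real.norm_of_nonneg hr.le, mul_one]
  rw [this, Measure.addHaar_smul_of_nonneg μ hr.le]

lemma setLIntegral_gaussianWeight_of_pos_smul_mem {C : Set F}
    (hC : ∀ c : ℝ, 0 < c → ∀ x ∈ C, c • x ∈ C) :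
    ∫⁻ x in C, gaussianWeight x ∂μ =
      gaussianConeConstant (Module.finrank ℝ F) * μ (C ∩ closedBall 0 1) := by
  have hlevel : ∀ᵐ t ∂volume.restrict (Ioi (0 : ℝ)),
      μ.restrict C {x | t ≤ Real.exp (-‖x‖ ^ 2)} = (Ioo 0 1).indicator
        (fun t ↦ ENNReal.ofReal (√(-Real.log t) ^ Module.finrank ℝ F) * μ (C ∩ closedBall 0 1))
        t := by
    -- at `t = 1` the superlevel set is `{0}`, out of reach of the scaling argument
    filter_upwards [ae_restrict_mem measurableSet_Ioi, Measure.ae_ne _ 1] with t ht₀ ht₁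
    rcases ht₁.lt_or_gt with ht₁ | ht₁
    · have hr : 0 < √(-Real.log t) := Real.sqrt_pos.2 (neg_pos.2 (Real.log_neg ht₀ ht₁))
      rw [indicator_of_mem (show t ∈ Ioo 0 1 from ⟨ht₀, ht₁⟩),
        setOf_le_exp_neg_norm_sq ht₀ ht₁.le, Measure.restrict_apply measurableSet_closedBall,
        inter_comm, measure_inter_closedBall_of_pos_smul_mem μ hC hr]
    · rw [indicator_of_notMem fun h ↦ h.2.not_gt ht₁, setOf_le_exp_neg_norm_sq_of_one_lt ht₁,
        measure_empty]
  have hfinite : μ (C ∩ closedBall 0 1) ≠ ∞ :=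
    measure_ne_top_of_subset inter_subset_right measure_closedBall_lt_top.ne
  unfold gaussianWeight
  rw [lintegral_eq_lintegral_meas_le _ (.of_forall fun x ↦ (Real.exp_pos _).le)
      (by fun_prop), lintegral_congr_ae hlevel, lintegral_indicator measurableSet_Ioo,
    Measure.restrict_restrict measurableSet_Ioo, inter_eq_left.2 Ioo_subset_Ioi_self,
    lintegral_mul_const' _ _ hfinite, gaussianConeConstant]

lemma lintegral_gaussianWeight :
    ∫⁻ x, gaussianWeight x ∂μ =
      gaussianConeConstant (Module.finrank ℝ F) * μ (closedBall 0 1) := by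
  simpa using setLIntegral_gaussianWeight_of_pos_smul_mem μ (C := univ) fun _ _ _ _ ↦ mem_univ _

lemma gaussianConeConstant_ne_top (n : ℕ) : gaussianConeConstant n ≠ ∞ := by
  have hint : Integrable fun x : EuclideanSpace ℝ (Fin n) ↦ Real.exp (-‖x‖ ^ 2) := by
    simpa [Complex.norm_exp, ← Complex.ofReal_pow] using
      (GaussianFourier.integrable_cexp_neg_mul_sq_norm_add (b := 1) one_pos 0 0).norm
  have h := lintegral_gaussianWeight (volume : Measure (EuclideanSpace ℝ (Fin n)))
  rw [finrank_euclideanSpace_fin] at h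
  exact (ENNReal.lt_top_of_mul_ne_top_left (h ▸ hint.lintegral_lt_top.ne)
    (measure_closedBall_pos _ _ one_pos).ne').ne

lemma lintegral_gaussianWeight_ne_zero : ∫⁻ x, gaussianWeight x ∂μ ≠ 0 := by
  rw [lintegral_gaussianWeight]
  exact mul_ne_zero (gaussianConeConstant_ne_zero _) (measure_closedBall_pos μ 0 one_pos).ne'

lemma lintegral_gaussianWeight_ne_top : ∫⁻ x, gaussianWeight x ∂μ ≠ ∞ := by
  rw [lintegral_gaussianWeight]
  exact ENNReal.mul_ne_top (gaussianConeConstant_ne_top _) measure_closedBall_lt_top.ne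

lemma measure_inter_closedBall_div_eq_gaussianWeight_ratio {C : Set F}
    (hC : ∀ c : ℝ, 0 < c → ∀ x ∈ C, c • x ∈ C) :
    μ (C ∩ closedBall 0 1) / μ (closedBall 0 1) =
      (∫⁻ x in C, gaussianWeight x ∂μ) / ∫⁻ x, gaussianWeight x ∂μ := by
  rw [setLIntegral_gaussianWeight_of_pos_smul_mem μ hC, lintegral_gaussianWeight μ,
    ENNReal.mul_div_mul_left _ _ (gaussianConeConstant_ne_zero _) (gaussianConeConstant_ne_top _)]

end HaarMeasure

lemma gaussianWeight_withLp_prod {E₁ E₂ : Type*} [SeminormedAddCommGroup E₁]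
    [SeminormedAddCommGroup E₂] (p : WithLp 2 (E₁ × E₂)) :
    gaussianWeight p = gaussianWeight p.fst * gaussianWeight p.snd := by
  rw [gaussianWeight, gaussianWeight, gaussianWeight, ← ENNReal.ofReal_mul (Real.exp_pos _).le,
    ← Real.exp_add, WithLp.prod_norm_sq_eq_of_L2, neg_add]

lemma setLIntegral_gaussianWeight_preimage_ofLp_prod {E₁ E₂ : Type*}
    [NormedAddCommGroup E₁] [InnerProductSpace ℝ E₁] [FiniteDimensional ℝ E₁]
    [MeasurableSpace E₁] [BorelSpace E₁]
    [NormedAddCommGroup E₂] [InnerProductSpace ℝ E₂] [FiniteDimensional ℝ E₂]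
    [MeasurableSpace E₂] [BorelSpace E₂] (s : Set E₁) (t : Set E₂) :
    ∫⁻ p in @WithLp.ofLp 2 (E₁ × E₂) ⁻¹' (s ×ˢ t), gaussianWeight p =
      (∫⁻ x in s, gaussianWeight x) * ∫⁻ y in t, gaussianWeight y := by
  calc ∫⁻ p in @WithLp.ofLp 2 (E₁ × E₂) ⁻¹' (s ×ˢ t), gaussianWeight p
      = ∫⁻ z in s ×ˢ t, gaussianWeight z.1 * gaussianWeight z.2 := by
        simp_rw [gaussianWeight_withLp_prod]
        exact (WithLp.volume_preserving_ofLp E₁ E₂).setLIntegral_comp_preimage_emb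
          (MeasurableEquiv.toLp 2 (E₁ × E₂)).symm.measurableEmbedding
          (fun z ↦ gaussianWeight z.1 * gaussianWeight z.2) (s ×ˢ t)
    _ = (∫⁻ x in s, gaussianWeight x) * ∫⁻ y in t, gaussianWeight y := by
        rw [Measure.volume_eq_prod, ← Measure.prod_restrict]
        exact lintegral_prod_mul (by unfold gaussianWeight; fun_prop)
          (by unfold gaussianWeight; fun_prop)

theorem solid_angle_prod_cone_general
    {E₁ E₂ : Type*}
    [NormedAddCommGroup E₁] [InnerProductSpace ℝ E₁] [FiniteDimensional ℝ E₁]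
    [MeasurableSpace E₁] [BorelSpace E₁]
    [NormedAddCommGroup E₂] [InnerProductSpace ℝ E₂] [FiniteDimensional ℝ E₂]
    [MeasurableSpace E₂] [BorelSpace E₂]
    [MeasurableSpace (WithLp 2 (E₁ × E₂))] [BorelSpace (WithLp 2 (E₁ × E₂))]
    (C₁ : Set E₁) (C₂ : Set E₂)
    (hC₁smul : ∀ (c : ℝ), 0 ≤ c → ∀ x ∈ C₁, c • x ∈ C₁)
    (hC₂smul : ∀ (c : ℝ), 0 ≤ c → ∀ x ∈ C₂, c • x ∈ C₂) :
    volume ({p : WithLp 2 (E₁ × E₂) |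
          (WithLp.equiv 2 (E₁ × E₂) p).1 ∈ C₁ ∧ (WithLp.equiv 2 (E₁ × E₂) p).2 ∈ C₂} ∩
        Metric.closedBall 0 1) /
      volume (Metric.closedBall (0 : WithLp 2 (E₁ × E₂)) 1) =
    (volume (C₁ ∩ Metric.closedBall 0 1) / volume (Metric.closedBall (0 : E₁) 1)) *
      (volume (C₂ ∩ Metric.closedBall 0 1) / volume (Metric.closedBall (0 : E₂) 1)) := by
  obtain rfl : ‹MeasurableSpace (WithLp 2 (E₁ × E₂))› = WithLp.measurableSpace 2 (E₁ × E₂) :=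
    BorelSpace.measurable_eq.trans BorelSpace.measurable_eq.symm
  set C : Set (WithLp 2 (E₁ × E₂)) := WithLp.ofLp ⁻¹' (C₁ ×ˢ C₂)
  have hC : ∀ c : ℝ, 0 < c → ∀ p ∈ C, c • p ∈ C :=
    fun c hc p hp ↦ ⟨hC₁smul c hc.le _ hp.1, hC₂smul c hc.le _ hp.2⟩
  have hprod := setLIntegral_gaussianWeight_preimage_ofLp_prod (E₁ := E₁) (E₂ := E₂)
  have huniv : ∫⁻ p : WithLp 2 (E₁ × E₂), gaussianWeight p =
      (∫⁻ x : E₁, gaussianWeight x) * ∫⁻ y : E₂, gaussianWeight y := by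
    simpa using hprod univ univ
  change volume (C ∩ closedBall 0 1) / _ = _
  rw [measure_inter_closedBall_div_eq_gaussianWeight_ratio _ hC,
    measure_inter_closedBall_div_eq_gaussianWeight_ratio _ fun c hc ↦ hC₁smul c hc.le,
    measure_inter_closedBall_div_eq_gaussianWeight_ratio _ fun c hc ↦ hC₂smul c hc.le,
    hprod, huniv,
    ENNReal.mul_div_mul_comm (.inl (lintegral_gaussianWeight_ne_zero _))
      (.inl (lintegral_gaussianWeight_ne_top _))]

/-- The normalized solid angle of a product of two measurable convex cones, in the
product `E₁ ×₂ E₂` of two finite-dimensional real inner product spaces (with the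
product inner product), is the product of the normalized solid angles. -/
theorem solid_angle_prod_cone
    {E₁ E₂ : Type*}
    [NormedAddCommGroup E₁] [InnerProductSpace ℝ E₁] [FiniteDimensional ℝ E₁]
    [MeasurableSpace E₁] [BorelSpace E₁]
    [NormedAddCommGroup E₂] [InnerProductSpace ℝ E₂] [FiniteDimensional ℝ E₂]
    [MeasurableSpace E₂] [BorelSpace E₂]
    [MeasurableSpace (WithLp 2 (E₁ × E₂))] [BorelSpace (WithLp 2 (E₁ × E₂))]
    (C₁ : Set E₁) (C₂ : Set E₂)
    (hC₁m : MeasurableSet C₁)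
    (hC₁add : ∀ x ∈ C₁, ∀ y ∈ C₁, x + y ∈ C₁)
    (hC₁smul : ∀ (c : ℝ), 0 ≤ c → ∀ x ∈ C₁, c • x ∈ C₁)
    (hC₂m : MeasurableSet C₂)
    (hC₂add : ∀ x ∈ C₂, ∀ y ∈ C₂, x + y ∈ C₂)
    (hC₂smul : ∀ (c : ℝ), 0 ≤ c → ∀ x ∈ C₂, c • x ∈ C₂) :
    volume ({p : WithLp 2 (E₁ × E₂) |
          (WithLp.equiv 2 (E₁ × E₂) p).1 ∈ C₁ ∧ (WithLp.equiv 2 (E₁ × E₂) p).2 ∈ C₂} ∩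
        Metric.closedBall 0 1) /
      volume (Metric.closedBall (0 : WithLp 2 (E₁ × E₂)) 1) =
    (volume (C₁ ∩ Metric.closedBall 0 1) / volume (Metric.closedBall (0 : E₁) 1)) *
      (volume (C₂ ∩ Metric.closedBall 0 1) / volume (Metric.closedBall (0 : E₂) 1)) :=
  solid_angle_prod_cone_general C₁ C₂ hC₁smul hC₂smul
end

section
/- Let E be a finite-dimensional real inner product space and let W be a finite subgroup of the orthogonal group of E that is generated by reflections and has no nonzero fixed vectors (i.e., the subspace of W-invariant vectors of E is zero). Then (1/|W|) · ∑_{w ∈ W} det(1 − w) = 1, where det(1 − w) denotes the determinant of the endomorphism id_E − w of E. -/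
/-!
Expanding `det (1 - w)` multilinearly in its columns `b i - w (b i)`, for a basis `b`, writes it
as `∑ₛ det_b (-w b on s, b off s)` over subsets `s` of indices. The term `s = ∅` is `1`. For
`s ≠ ∅`, summing over `W` gives a `W`-invariant alternating form in the slots of `s`, and such a
form is zero: a reflection `σ` with root `v` moves every vector along `v`, so invariance and then
alternation give `f (…, v, …) = f (σ …, σ v, σ …) = -f (…, v, …)`. Hence `f` vanishes as soon as
one argument is a root, and the roots span `E` since their orthogonal complement is fixed by `W`.
-/

open scoped RealInnerProductSpace

open Function

namespace AlternatingMap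

section Semiring

variable {R M N ι : Type*} [Semiring R] [AddCommMonoid M] [Module R M] [AddCommMonoid N]
  [Module R N]

instance : IsZeroApply (M [⋀^ι]→ₗ[R] N) (ι → M) N := ⟨zero_apply⟩

instance : IsAddApply (M [⋀^ι]→ₗ[R] N) (ι → M) N := ⟨add_apply⟩

def domDomRestrict (f : M [⋀^ι]→ₗ[R] N) (P : ι → Prop) [DecidablePred P]
    (z : {a // ¬P a} → M) : M [⋀^{a // P a}]→ₗ[R] N where
  toMultilinearMap := f.toMultilinearMap.domDomRestrict P z
  map_eq_zero_of_eq' x i j hx hij :=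
    f.map_eq_zero_of_eq (i := i.1) (j := j.1) _ (by simp [i.2, j.2, hx])
      (Subtype.coe_injective.ne hij)

theorem domDomRestrict_mem_apply [DecidableEq ι] (f : M [⋀^ι]→ₗ[R] N) (s : Finset ι)
    (x z : ι → M) :
    f.domDomRestrict (· ∈ s) (fun i => z i) (fun i => x i) = f (s.piecewise x z) :=
  rfl

theorem map_update_add_smul_self [DecidableEq ι] [Fintype ι] (f : M [⋀^ι]→ₗ[R] N)
    (u : ι → M) (c : ι → R) (j : ι) (v : M) :
    f (update (fun i => u i + c i • v) j v) = f (update u j v) := by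
  suffices h : ∀ T : Finset ι,
      f (update (T.piecewise (fun i => u i + c i • v) u) j v) = f (update u j v) by
    simpa using h Finset.univ
  intro T
  induction T using Finset.induction_on with
  | empty => rw [Finset.piecewise_empty]
  | insert a T haT ih =>
    rw [Finset.piecewise_insert]
    rcases eq_or_ne a j with rfl | haj
    · rwa [update_idem]
    rw [update_comm haj, f.map_update_add, f.map_update_smul, map_update_update _ _ haj.symm,
      smul_zero, add_zero, ← update_comm haj,
      ← Finset.piecewise_eq_of_notMem T (fun i => u i + c i • v) u haT, update_eq_self, ih]

end Semiring

theorem map_update_eq_zero_of_invariant {R M N ι : Type*} [Ring R] [AddCommGroup M]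
    [Module R M] [AddCommGroup N] [Module R N] [IsAddTorsionFree N] [DecidableEq ι] [Fintype ι]
    (f : M [⋀^ι]→ₗ[R] N) {σ : M → M} (hf : ∀ u, f (fun i => σ (u i)) = f u) {v : M}
    (hσv : σ v = -v) (hσ : ∀ x, ∃ c : R, σ x = x + c • v) (u : ι → M) (j : ι) :
    f (update u j v) = 0 := by
  choose c hc using hσ
  refine self_eq_neg.mp ?_
  calc f (update u j v) = f (fun i => σ (update u j v i)) := (hf _).symm
    _ = f (update (fun i => u i + c (u i) • v) j (-v)) := by
      rw [← comp_def σ, comp_update, hσv]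
      simp only [comp_def, hc]
    _ = -f (update u j v) := by
      rw [f.map_update_neg, map_update_add_smul_self]

end AlternatingMap

theorem LinearMap.det_id_sub_eq_sum {R M ι : Type*} [CommRing R] [AddCommGroup M] [Module R M]
    [Fintype ι] [DecidableEq ι] (b : Module.Basis ι R M) (g : M →ₗ[R] M) :
    LinearMap.det (LinearMap.id - g) =
      ∑ s : Finset ι, b.det (s.piecewise (fun i => g (-b i)) b) := by
  have h : ⇑(LinearMap.id - g : M →ₗ[R] M) ∘ b = (fun i => g (-b i)) + ⇑b := by
    ext i
    simp [sub_eq_neg_add]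
  rw [← mul_one (LinearMap.det _), ← b.det_self, ← b.det_comp, h, AlternatingMap.map_add_univ]

section Reflection

variable {E : Type*} [NormedAddCommGroup E] [InnerProductSpace ℝ E]

def reflectionRoots (W : Subgroup (E ≃ₗᵢ[ℝ] E)) : Set E :=
  {v | ∃ σ ∈ W, σ v = -v ∧ ∀ u : E, ⟪u, v⟫ = 0 → σ u = u}

theorem exists_apply_eq_add_smul_of_apply_eq_neg {F : Type*} [FunLike F E E]
    [LinearMapClass F ℝ E E] {σ : F} {v : E} (hσv : σ v = -v)
    (hσ : ∀ u, ⟪u, v⟫ = 0 → σ u = u) (x : E) : ∃ c : ℝ, σ x = x + c • v := by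
  obtain ⟨y, hy, z, hz, rfl⟩ := (ℝ ∙ v).exists_add_mem_mem_orthogonal x
  obtain ⟨a, rfl⟩ := Submodule.mem_span_singleton.mp hy
  refine ⟨-2 * a, ?_⟩
  rw [map_add, map_smul, hσv, hσ z (Submodule.mem_orthogonal_singleton_iff_inner_left.mp hz)]
  module

theorem span_reflectionRoots_eq_top [FiniteDimensional ℝ E] (W : Subgroup (E ≃ₗᵢ[ℝ] E))
    (hgen : W = Subgroup.closure {w : E ≃ₗᵢ[ℝ] E | w ∈ W ∧
      ∃ v : E, v ≠ 0 ∧ w v = -v ∧ ∀ u : E, ⟪u, v⟫ = 0 → w u = u})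
    (hfix : ∀ v : E, (∀ w ∈ W, w v = v) → v = 0) :
    Submodule.span ℝ (reflectionRoots W) = ⊤ := by
  rw [← Submodule.orthogonal_eq_bot_iff, Submodule.eq_bot_iff]
  intro x hx
  refine hfix x fun w hw => Subgroup.closure_induction (fun σ hσ => ?_) rfl
    (fun a b _ _ ha hb => ?_) (fun a _ ha => ?_) (hgen.le hw)
  · obtain ⟨hσW, v, -, hσv, hσfix⟩ := hσ
    exact hσfix x ((Submodule.mem_orthogonal' _ x).mp hx v
      (Submodule.subset_span ⟨σ, hσW, hσv, hσfix⟩))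
  · simp [ha, hb]
  · simpa using congrArg a.symm ha.symm

variable {N : Type*} [AddCommGroup N] [Module ℝ N] [IsAddTorsionFree N]

theorem AlternatingMap.eq_zero_of_invariant {ι : Type*} [Fintype ι] [DecidableEq ι] [Nonempty ι]
    {W : Subgroup (E ≃ₗᵢ[ℝ] E)} (hW : Submodule.span ℝ (reflectionRoots W) = ⊤)
    (f : E [⋀^ι]→ₗ[ℝ] N) (hf : ∀ w ∈ W, ∀ u, f (fun i => w (u i)) = f u) : f = 0 := by
  obtain ⟨j⟩ := ‹Nonempty ι›
  let Z : Submodule ℝ E := ⨅ u, LinearMap.ker (f.toMultilinearMap.toLinearMap u j)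
  have hroots : reflectionRoots W ⊆ Z := fun v ⟨σ, hσW, hσv, hσfix⟩ =>
    Submodule.mem_iInf _ |>.mpr fun u => f.map_update_eq_zero_of_invariant (hf σ hσW) hσv
      (exists_apply_eq_add_smul_of_apply_eq_neg hσv hσfix) u j
  have hZ : Z = ⊤ := eq_top_iff.mpr (hW ▸ Submodule.span_le.mpr hroots)
  ext u
  simpa using Submodule.mem_iInf _ |>.mp (hZ ▸ Submodule.mem_top : u j ∈ Z) u

theorem AlternatingMap.sum_map_comp_eq_zero {ι : Type*} [Fintype ι] [DecidableEq ι]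
    [Nonempty ι] {W : Subgroup (E ≃ₗᵢ[ℝ] E)} [Fintype W]
    (hW : Submodule.span ℝ (reflectionRoots W) = ⊤) (f : E [⋀^ι]→ₗ[ℝ] N) (u : ι → E) :
    ∑ w : W, f (fun i => (w : E ≃ₗᵢ[ℝ] E) (u i)) = 0 := by
  let F : E [⋀^ι]→ₗ[ℝ] N := ∑ w : W, f.compLinearMap (w : E ≃ₗᵢ[ℝ] E).toLinearEquiv
  have hF : F = 0 := by
    refine AlternatingMap.eq_zero_of_invariant hW F fun g hg u => ?_
    simp only [F, sum_apply, AlternatingMap.compLinearMap_apply]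
    exact Fintype.sum_equiv (Equiv.mulRight ⟨g, hg⟩) _ _ fun w => rfl
  simpa [F] using AlternatingMap.congr_fun hF u

theorem AlternatingMap.sum_map_piecewise_eq_zero {ι : Type*} [DecidableEq ι]
    {W : Subgroup (E ≃ₗᵢ[ℝ] E)} [Fintype W] (hW : Submodule.span ℝ (reflectionRoots W) = ⊤)
    (f : E [⋀^ι]→ₗ[ℝ] N) {s : Finset ι} (hs : s.Nonempty) (x z : ι → E) :
    ∑ w : W, f (s.piecewise (fun i => (w : E ≃ₗᵢ[ℝ] E) (x i)) z) = 0 := by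
  have : Nonempty s := hs.to_subtype
  convert (f.domDomRestrict (· ∈ s) fun i => z i).sum_map_comp_eq_zero hW (fun i => x i)
    using 2 with w
  exact (f.domDomRestrict_mem_apply s _ z).symm

end Reflection

/-- Solomon's formula at `(q,t) = (1,0)`: for a finite reflection group `W` acting on a
finite-dimensional real inner product space `E` with no nonzero fixed vectors,
`(1/|W|) ∑_{w ∈ W} det(1 − w) = 1`. -/
theorem average_det_one_sub_eq_one
    {E : Type*} [NormedAddCommGroup E] [InnerProductSpace ℝ E] [FiniteDimensional ℝ E]
    (W : Subgroup (E ≃ₗᵢ[ℝ] E)) [Fintype W]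
    (hgen : W = Subgroup.closure {w : E ≃ₗᵢ[ℝ] E | w ∈ W ∧
      ∃ v : E, v ≠ 0 ∧ w v = -v ∧ ∀ u : E, ⟪u, v⟫ = 0 → w u = u})
    (hfix : ∀ v : E, (∀ w ∈ W, w v = v) → v = 0) :
    (1 / (Fintype.card W : ℝ)) *
      ∑ w : W, LinearMap.det
        ((LinearMap.id : E →ₗ[ℝ] E) - ((w : E ≃ₗᵢ[ℝ] E).toLinearEquiv : E →ₗ[ℝ] E)) = 1 := by
  let b := Module.finBasis ℝ E
  have hW := span_reflectionRoots_eq_top W hgen hfix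
  have hsum : ∑ w : W, LinearMap.det
      ((LinearMap.id : E →ₗ[ℝ] E) - ((w : E ≃ₗᵢ[ℝ] E).toLinearEquiv : E →ₗ[ℝ] E))
        = Fintype.card W := by
    simp_rw [LinearMap.det_id_sub_eq_sum b]
    rw [Finset.sum_comm, Finset.sum_eq_single ∅]
    · simp [b.det_self]
    · exact fun s _ hs => AlternatingMap.sum_map_piecewise_eq_zero hW b.det
        (Finset.nonempty_iff_ne_empty.mpr hs) _ _
    · simp
  rw [hsum]
  field_simp
end

section
/- For every integer n ≥ 2, 2 · (C(2n, n)/4^n) + ∑_{h=2}^{n} ((h−1)/(4^{h−1} h)) · C(2(h−1), h−1) · (C(2(n−h), n−h)/4^{n−h}) = 1, as an identity of rational numbers. -/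
/-!
`nuB k = C(2k,k)/4^k` and `nuD h` are `ν(B_k)` and `ν(D_h)`. Since `∑ nuB k xᵏ = (1 - x)^(-1/2)`,
the convolution `∑_{i+j=n} nuB i * nuB j` equals `1` for every `n`; here this follows by induction
from the recurrence `2(k+1) nuB (k+1) = (2k+1) nuB k` and the symmetry `i ↔ j` of the convolution.
The same recurrence gives `nuD h = 2 nuB h - nuB (h-1)`, which vanishes at `h = 1`, so two
convolutions evaluate the sum over `h` to `2 (1 - nuB n) - 1`.
-/

open Finset

noncomputable def nuB (k : ℕ) : ℚ := (Nat.centralBinom k : ℚ) / 4 ^ k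

noncomputable def nuD (h : ℕ) : ℚ :=
  ((h : ℚ) - 1) / (4 ^ (h - 1) * h) * (Nat.centralBinom (h - 1) : ℚ)

lemma nuB_zero : nuB 0 = 1 := by simp [nuB]

lemma two_mul_succ_mul_nuB_succ (k : ℕ) :
    2 * ((k : ℚ) + 1) * nuB (k + 1) = (2 * k + 1) * nuB k := by
  have key : ((k : ℚ) + 1) * Nat.centralBinom (k + 1) = 2 * (2 * k + 1) * Nat.centralBinom k := by
    exact_mod_cast Nat.succ_mul_centralBinom_succ k
  unfold nuB
  rw [pow_succ]
  field_simp
  linear_combination 2 * key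

lemma nuD_succ (m : ℕ) : nuD (m + 1) = 2 * nuB (m + 1) - nuB m := by
  have key := two_mul_succ_mul_nuB_succ m
  unfold nuD
  unfold nuB at *
  simp only [Nat.add_sub_cancel, Nat.cast_add, Nat.cast_one, add_sub_cancel_right]
  rw [pow_succ] at *
  field_simp at *
  linear_combination -key

lemma nuD_one : nuD 1 = 0 := by simp [nuD]

lemma two_mul_sum_antidiagonal_fst_mul {R : Type*} [CommSemiring R] (c : ℕ → R) (n : ℕ) :
    2 * ∑ p ∈ antidiagonal n, (p.1 : R) * c p.1 * c p.2 =
      n * ∑ p ∈ antidiagonal n, c p.1 * c p.2 := by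
  rw [two_mul]
  nth_rewrite 2 [← Nat.sum_antidiagonal_swap]
  rw [← sum_add_distrib, mul_sum]
  refine sum_congr rfl fun p hp => ?_
  rw [← mem_antidiagonal.mp hp, Prod.fst_swap, Prod.snd_swap, Nat.cast_add]
  ring

lemma sum_antidiagonal_nuB_mul_nuB (n : ℕ) : ∑ p ∈ antidiagonal n, nuB p.1 * nuB p.2 = 1 := by
  induction n with
  | zero => simp [nuB_zero]
  | succ n ih =>
    have hshift : ∑ p ∈ antidiagonal (n + 1), (p.1 : ℚ) * nuB p.1 * nuB p.2 =
        ∑ p ∈ antidiagonal n, (p.1 : ℚ) * nuB p.1 * nuB p.2 +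
          (1 / 2) * ∑ p ∈ antidiagonal n, nuB p.1 * nuB p.2 := by
      rw [Nat.sum_antidiagonal_succ, mul_sum, ← sum_add_distrib, Nat.cast_zero, zero_mul, zero_mul,
        zero_add]
      refine sum_congr rfl fun p _ => ?_
      push_cast
      linear_combination nuB p.2 / 2 * two_mul_succ_mul_nuB_succ p.1
    have hsymm := two_mul_sum_antidiagonal_fst_mul nuB n
    have hsymm_succ := two_mul_sum_antidiagonal_fst_mul nuB (n + 1)
    rw [ih] at hsymm
    rw [hshift, ih, Nat.cast_add_one] at hsymm_succ
    have h : ((n : ℚ) + 1) * (∑ p ∈ antidiagonal (n + 1), nuB p.1 * nuB p.2 - 1) = 0 := by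
      linear_combination hsymm - hsymm_succ
    simpa [sub_eq_zero, Nat.cast_add_one_ne_zero] using h

lemma sum_antidiagonal_nuD_succ_mul_nuB (m : ℕ) :
    ∑ p ∈ antidiagonal m, nuD (p.1 + 1) * nuB p.2 = 1 - 2 * nuB (m + 1) := by
  have h := sum_antidiagonal_nuB_mul_nuB (m + 1)
  rw [Nat.sum_antidiagonal_succ, nuB_zero] at h
  simp only [nuD_succ, sub_mul, sum_sub_distrib, mul_assoc, ← mul_sum,
    sum_antidiagonal_nuB_mul_nuB]
  linear_combination 2 * h

lemma sum_Icc_one_eq_sum_antidiagonal {M : Type*} [AddCommMonoid M] (g : ℕ → ℕ → M) (m : ℕ) :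
    ∑ h ∈ Icc 1 (m + 1), g h (m + 1 - h) = ∑ p ∈ antidiagonal m, g (p.1 + 1) p.2 := by
  rw [Nat.sum_antidiagonal_eq_sum_range_succ (fun i j => g (i + 1) j), range_eq_Ico]
  simp_rw [← Nat.add_sub_add_right m 1]
  rw [sum_Ico_add' (fun h => g h (m + 1 - h)), ← Ico_add_one_right_eq_Icc]

/-- Type `Bₙ` case of the main identity: `2ν(Bₙ) + ∑_{h=2}^{n} ν(D_h) ν(B_{n−h}) = 1`. -/
theorem sum_nu_B_eq_one (n : ℕ) (hn : 2 ≤ n) :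
    2 * ((Nat.choose (2 * n) n : ℚ) / 4 ^ n) +
      ∑ h ∈ Finset.Icc 2 n,
        (((h : ℚ) - 1) / (4 ^ (h - 1) * (h : ℚ))) * (Nat.choose (2 * (h - 1)) (h - 1) : ℚ) *
          ((Nat.choose (2 * (n - h)) (n - h) : ℚ) / 4 ^ (n - h)) = 1 := by
  obtain ⟨m, rfl⟩ : ∃ m, n = m + 1 := ⟨n - 1, by omega⟩
  change 2 * nuB (m + 1) + ∑ h ∈ Icc 2 (m + 1), nuD h * nuB (m + 1 - h) = 1
  have hIcc : ∑ h ∈ Icc 2 (m + 1), nuD h * nuB (m + 1 - h) =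
      ∑ h ∈ Icc 1 (m + 1), nuD h * nuB (m + 1 - h) := by
    rw [← insert_Icc_add_one_left_eq_Icc (by omega : 1 ≤ m + 1), sum_insert (by simp),
      nuD_one, zero_mul, zero_add]
    rfl
  rw [hIcc, sum_Icc_one_eq_sum_antidiagonal (fun h j => nuD h * nuB j),
    sum_antidiagonal_nuD_succ_mul_nuB]
  ring
end
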